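/- arXiv:2411.14195 — 2 statements merged into one kernel-verified Lean document; each statement's English description precedes it below -/
import Mathlib

section
/- For every positive integer n and every symmetric convex body K ⊂ ℝⁿ, there is a rotation U ∈ SO(n) such that for every norm N on ℝⁿ and every k ∈ {2, …, n}, the diameter of Q_{k-1}(U K) with respect to N is at most 3 times the diameter of Q_k(U K) with respect to N. -/
open Set Pointwise

/-- The orthogonal projection of `ℝⁿ` onto the coordinate subspace `span {e_j : j ∈ S}`. -/
noncomputable def coordProj {n : ℕ} (S : Finset (Fin n)) (x : EuclideanSpace ℝ (Fin n)) :
    EuclideanSpace ℝ (Fin n) :=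
  WithLp.toLp 2 (fun j => if j ∈ S then x j else 0)

/-- The `k`-convex hull of a set `K ⊆ ℝⁿ`. -/
noncomputable def kConvexHull (n k : ℕ) (K : Set (EuclideanSpace ℝ (Fin n))) :
    Set (EuclideanSpace ℝ (Fin n)) :=
  ⋂ S ∈ {S : Finset (Fin n) | S.card = k}, coordProj S ⁻¹' (coordProj S '' K)

/-- The diameter of a set `A` with respect to a norm `N`. -/
noncomputable def ndiam {n : ℕ} (N : EuclideanSpace ℝ (Fin n) → ℝ)
    (A : Set (EuclideanSpace ℝ (Fin n))) : ℝ :=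
  sSup {d : ℝ | ∃ x ∈ A, ∃ y ∈ A, d = N (x - y)}

/-!
Let `L` be the absolute polar of `K`; it is compact because `0` is interior to `K`. Choose an
orthonormal basis greedily: `u i` points to a point of maximal norm `r i` of
`L ∩ {u 0, …, u (i-1)}ᗮ`, and one `u i` may be negated to fix the orientation since `L = -L`.
After the rotation `U` taking `u i` to `e i`, every `z` in the polar of `M = UK` whose first
nonzero coordinate is `z j` satisfies `|z j * y j| ≤ r j * |y j| ≤ 1` for all `y ∈ M`.

Now let `z` be in the polar of `M` and supported on a set `S` of `k` coordinates, with first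
coordinate `j`. Then `z - z j e j` is supported on `k - 1` coordinates, so on `Q_{k-1}(M)` it takes
the values it takes on `M`, where it is at most `2`; and `z j * x j` is at most `1` on `Q_{k-1}(M)`
as well. Thus `|⟪z, x⟫| ≤ 3` on `Q_{k-1}(M)`, and the bipolar theorem for the projections `P_S M`
gives `Q_{k-1}(M) ⊆ 3 Q_k(M)`, hence the bound on diameters.
-/

open RealInnerProductSpace Module

section InnerProductSpace

variable {E : Type*} [NormedAddCommGroup E] [InnerProductSpace ℝ E]

def absPolar (K : Set E) : Set E :=
  {u | ∀ y ∈ K, |⟪u, y⟫| ≤ 1}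

lemma zero_mem_absPolar (K : Set E) : (0 : E) ∈ absPolar K := by
  intro y _
  simp

lemma neg_mem_absPolar {K : Set E} {u : E} (hu : u ∈ absPolar K) : -u ∈ absPolar K := by
  intro y hy
  rw [inner_neg_left, abs_neg]
  exact hu y hy

lemma isClosed_absPolar (K : Set E) : IsClosed (absPolar K) := by
  simp only [absPolar, ofPred_forall]
  exact isClosed_biInter fun y _ =>
    isClosed_le (continuous_id.inner continuous_const).abs continuous_const

lemma absPolar_subset_closedBall {K : Set E} {ε : ℝ} (hε : 0 < ε)
    (hK : Metric.closedBall 0 ε ⊆ K) : absPolar K ⊆ Metric.closedBall 0 ε⁻¹ := by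
  intro u hu
  rw [mem_closedBall_zero_iff, ← mul_one ε⁻¹, le_inv_mul_iff₀ hε]
  rcases eq_or_ne u 0 with rfl | hu0
  · simp
  have hy : (ε / ‖u‖) • u ∈ K := hK <| by
    rw [mem_closedBall_zero_iff, norm_smul, Real.norm_of_nonneg (by positivity),
      div_mul_cancel₀ _ (norm_ne_zero_iff.2 hu0)]
  have := hu _ hy
  rwa [real_inner_smul_right, real_inner_self_eq_norm_sq, abs_of_nonneg (by positivity),
    div_mul_eq_mul_div, sq, ← mul_assoc, mul_div_cancel_right₀ _ (norm_ne_zero_iff.2 hu0)] at this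

lemma isCompact_absPolar [FiniteDimensional ℝ E] {K : Set E} (hK : (0 : E) ∈ interior K) :
    IsCompact (absPolar K) := by
  obtain ⟨ε, hε, hεK⟩ := Metric.nhds_basis_closedBall.mem_iff.1 (mem_interior_iff_mem_nhds.1 hK)
  exact (isCompact_closedBall 0 ε⁻¹).of_isClosed_subset (isClosed_absPolar K)
    (absPolar_subset_closedBall hε hεK)

lemma Convex.zero_mem_interior_of_neg_eq {K : Set E} (hK : Convex ℝ K) (hsym : K = -K)
    (hint : (interior K).Nonempty) : (0 : E) ∈ interior K := by
  obtain ⟨x, hx⟩ := hint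
  have hx' : -x ∈ interior K := by
    refine interior_maximal (fun z hz => ?_) isOpen_interior.neg (neg_mem_neg.2 hx)
    rw [hsym, mem_neg]
    exact interior_subset (mem_neg.1 hz)
  simpa using hK.interior.midpoint_mem hx hx'

lemma absPolar_absPolar_subset [CompleteSpace E] {C : Set E} (hC : IsClosed C)
    (hconv : Convex ℝ C) (h0 : (0 : E) ∈ C) (hsym : ∀ y ∈ C, -y ∈ C) :
    absPolar (absPolar C) ⊆ C := by
  intro z hz
  by_contra hzC
  obtain ⟨f, c, hfC, hfz⟩ := geometric_hahn_banach_closed_point hconv hC hzC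
  have hc : 0 < c := by simpa using hfC 0 h0
  set w := c⁻¹ • (InnerProductSpace.toDual ℝ E).symm f
  have hw : ∀ y, ⟪w, y⟫ = c⁻¹ * f y := fun y => by
    rw [real_inner_smul_left, InnerProductSpace.toDual_symm_apply]
  have hwC : w ∈ absPolar C := fun y hy => by
    have h₁ := hfC y hy
    have h₂ := hfC (-y) (hsym y hy)
    rw [map_neg] at h₂
    rw [hw, abs_mul, abs_inv, abs_of_pos hc, inv_mul_le_one₀ hc]
    exact abs_le.2 ⟨by linarith, h₁.le⟩
  have := (abs_le.1 (hz w hwC)).2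
  rw [real_inner_comm, hw, inv_mul_le_one₀ hc] at this
  linarith

lemma Submodule.exists_norm_eq_one_smul_eq {W : Submodule ℝ E} (hW : W ≠ ⊥) {p : E}
    (hp : p ∈ W) : ∃ v ∈ W, ‖v‖ = 1 ∧ ‖p‖ • v = p := by
  rcases eq_or_ne p 0 with rfl | hp0
  · obtain ⟨w, hwW, hw0⟩ := W.exists_mem_ne_zero_of_ne_bot hW
    exact ⟨‖w‖⁻¹ • w, W.smul_mem _ hwW, norm_smul_inv_norm hw0, by simp⟩
  · exact ⟨‖p‖⁻¹ • p, W.smul_mem _ hp, norm_smul_inv_norm hp0,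
      smul_inv_smul₀ (norm_ne_zero_iff.2 hp0) p⟩

lemma Submodule.mem_orthogonal_span_range_iff {ι : Type*} {u : ι → E} {x : E} :
    x ∈ (span ℝ (range u))ᗮ ↔ ∀ l, ⟪u l, x⟫ = 0 := by
  refine ⟨fun hx l => inner_right_of_mem_orthogonal (subset_span (mem_range_self l)) hx,
    fun hx => ?_⟩
  have : span ℝ (range u) ≤ (ℝ ∙ x)ᗮ :=
    span_le.2 <| by
      rintro _ ⟨l, rfl⟩
      exact mem_orthogonal_singleton_iff_inner_left.2 (hx l)
  exact (mem_orthogonal _ _).2 fun y hy => by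
    simpa [real_inner_comm] using mem_orthogonal_singleton_iff_inner_left.1 (this hy)

lemma Orthonormal.snoc {m : ℕ} {u : Fin m → E} (hu : Orthonormal ℝ u) {v : E} (hv : ‖v‖ = 1)
    (hvu : ∀ l, ⟪u l, v⟫ = 0) : Orthonormal ℝ (Fin.snoc u v : Fin (m + 1) → E) := by
  have hvu' : ∀ l, ⟪v, u l⟫ = 0 := fun l => by rw [real_inner_comm]; exact hvu l
  rw [orthonormal_iff_ite] at hu ⊢
  intro i j
  induction i using Fin.lastCases <;> induction j using Fin.lastCases <;>
    simp [hv, hvu, hvu', hu, Fin.castSucc_ne_last, (Fin.castSucc_ne_last _).symm]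

def IsGreedyFrame (L : Set E) {m : ℕ} (u : Fin m → E) (r : Fin m → ℝ) : Prop :=
  (∀ i, r i • u i ∈ L) ∧ ∀ z ∈ L, ∀ i, (∀ l < i, ⟪u l, z⟫ = 0) → ‖z‖ ≤ r i

lemma IsGreedyFrame.of_eq_or_eq_neg {L : Set E} {m : ℕ} {u v : Fin m → E} {r : Fin m → ℝ}
    (hL : ∀ z ∈ L, -z ∈ L) (h : IsGreedyFrame L u r) (hv : ∀ i, v i = u i ∨ v i = -u i) :
    IsGreedyFrame L v r := by
  refine ⟨fun i => ?_, fun z hz i hzi => h.2 z hz i fun l hl => ?_⟩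
  · rcases hv i with hi | hi
    · exact hi ▸ h.1 i
    · simpa [hi] using hL _ (h.1 i)
  · rcases hv l with hl' | hl' <;> simpa [hl'] using hzi l hl

lemma IsGreedyFrame.exists_snoc [FiniteDimensional ℝ E] {L : Set E} (hL : IsCompact L)
    (h0 : (0 : E) ∈ L) {m : ℕ} (hm : m < finrank ℝ E) {u : Fin m → E} {r : Fin m → ℝ}
    (hu : Orthonormal ℝ u) (h : IsGreedyFrame L u r) :
    ∃ v ρ, Orthonormal ℝ (Fin.snoc u v : Fin (m + 1) → E) ∧
      IsGreedyFrame L (Fin.snoc u v : Fin (m + 1) → E) (Fin.snoc r ρ : Fin (m + 1) → ℝ) := by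
  set V := Submodule.span ℝ (range u)
  obtain ⟨p, hp, hpmax⟩ := (hL.inter_right V.isClosed_orthogonal).exists_isMaxOn
    ⟨0, h0, Vᗮ.zero_mem⟩ continuous_norm.continuousOn
  have hV : Vᗮ ≠ ⊥ := by
    rw [Ne, Submodule.orthogonal_eq_bot_iff]
    intro htop
    have : finrank ℝ V ≤ m := by simpa [Set.finrank] using finrank_range_le_card (R := ℝ) u
    rw [htop, finrank_top] at this
    omega
  obtain ⟨v, hvW, hv1, hpv⟩ := Vᗮ.exists_norm_eq_one_smul_eq hV hp.2
  have hvu := Submodule.mem_orthogonal_span_range_iff.1 hvW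
  refine ⟨v, ‖p‖, hu.snoc hv1 hvu, fun i => ?_, fun z hz i hzi => ?_⟩
  · induction i using Fin.lastCases
    · simpa [hpv] using hp.1
    · simpa using h.1 _
  · induction i using Fin.lastCases with
    | last =>
      have hzV : z ∈ Vᗮ := Submodule.mem_orthogonal_span_range_iff.2 fun l => by
        simpa using hzi l.castSucc (Fin.castSucc_lt_last l)
      simpa using hpmax ⟨hz, hzV⟩
    | cast i =>
      simpa using h.2 z hz i fun l hl => by
        simpa using hzi l.castSucc (Fin.castSucc_lt_castSucc_iff.2 hl)

lemma exists_orthonormal_isGreedyFrame [FiniteDimensional ℝ E] {L : Set E} (hL : IsCompact L)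
    (h0 : (0 : E) ∈ L) :
    ∀ m ≤ finrank ℝ E, ∃ (u : Fin m → E) (r : Fin m → ℝ), Orthonormal ℝ u ∧ IsGreedyFrame L u r
  | 0, _ => ⟨Fin.elim0, Fin.elim0, ⟨fun i => i.elim0, fun i => i.elim0⟩, fun i => i.elim0,
      fun _ _ i => i.elim0⟩
  | m + 1, hm => by
    obtain ⟨u, r, hu, h⟩ := exists_orthonormal_isGreedyFrame hL h0 m (by omega)
    obtain ⟨v, ρ, hv⟩ := h.exists_snoc hL h0 (by omega) hu
    exact ⟨_, _, hv⟩

end InnerProductSpace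

lemma OrthonormalBasis.det_repr_eq_one {ι : Type*} [Fintype ι] [DecidableEq ι]
    (b : OrthonormalBasis ι ℝ (EuclideanSpace ℝ ι))
    (hb : b.toBasis.orientation = (EuclideanSpace.basisFun ι ℝ).toBasis.orientation) :
    LinearMap.det (b.repr.toLinearEquiv : EuclideanSpace ℝ ι →ₗ[ℝ] EuclideanSpace ℝ ι) = 1 := by
  set e := (EuclideanSpace.basisFun ι ℝ).toBasis
  have hcomp := e.det_comp b.repr.toLinearEquiv.toLinearMap b
  have hb' : (b.repr.toLinearEquiv.toLinearMap ∘ b) = e := by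
    ext1 i; simp [e]
  have hdet : e.det b = 1 := by
    simpa [e] using
      (EuclideanSpace.basisFun ι ℝ).det_to_matrix_orthonormalBasis_of_same_orientation b hb.symm
  rw [hb', e.det_self, hdet, mul_one] at hcomp
  exact hcomp.symm

lemma exists_orthonormalBasis_det_repr_eq_one_isGreedyFrame {n : ℕ} (hn : 0 < n)
    {L : Set (EuclideanSpace ℝ (Fin n))} (hL : IsCompact L) (h0 : 0 ∈ L)
    (hneg : ∀ z ∈ L, -z ∈ L) :
    ∃ b : OrthonormalBasis (Fin n) ℝ (EuclideanSpace ℝ (Fin n)),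
      LinearMap.det (b.repr.toLinearEquiv :
        EuclideanSpace ℝ (Fin n) →ₗ[ℝ] EuclideanSpace ℝ (Fin n)) = 1 ∧
      ∃ r, IsGreedyFrame L b r := by
  have : Nonempty (Fin n) := ⟨⟨0, hn⟩⟩
  obtain ⟨u, r, hu, hur⟩ := exists_orthonormal_isGreedyFrame hL h0 n (by simp)
  let b₀ := OrthonormalBasis.mk hu
    (hu.linearIndependent.span_eq_top_of_card_eq_finrank (by simp)).ge
  let b := b₀.adjustToOrientation (EuclideanSpace.basisFun (Fin n) ℝ).toBasis.orientation
  refine ⟨b, b.det_repr_eq_one (b₀.orientation_adjustToOrientation _), r,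
    hur.of_eq_or_eq_neg hneg fun i => ?_⟩
  simpa [b₀] using b₀.adjustToOrientation_apply_eq_or_eq_neg _ i

section Coordinates

variable {n : ℕ}

noncomputable def coordProjₗ (S : Finset (Fin n)) :
    EuclideanSpace ℝ (Fin n) →ₗ[ℝ] EuclideanSpace ℝ (Fin n) where
  toFun := coordProj S
  map_add' x y := by ext j; by_cases hj : j ∈ S <;> simp [coordProj, hj]
  map_smul' c x := by ext j; by_cases hj : j ∈ S <;> simp [coordProj, hj]

lemma coe_coordProjₗ (S : Finset (Fin n)) : ⇑(coordProjₗ S) = coordProj S := rfl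

lemma inner_coordProj_left (S : Finset (Fin n)) (w x : EuclideanSpace ℝ (Fin n)) :
    ⟪coordProj S w, x⟫ = ⟪w, coordProj S x⟫ := by
  simp only [PiLp.inner_apply, coordProj]
  refine Finset.sum_congr rfl fun j _ => ?_
  by_cases hj : j ∈ S <;> simp [hj]

lemma inner_coordProj_of_support {T : Finset (Fin n)} {w : EuclideanSpace ℝ (Fin n)}
    (hw : ∀ i ∉ T, w i = 0) (x : EuclideanSpace ℝ (Fin n)) : ⟪w, coordProj T x⟫ = ⟪w, x⟫ := by
  simp only [PiLp.inner_apply, coordProj]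
  refine Finset.sum_congr rfl fun j _ => ?_
  by_cases hj : j ∈ T <;> simp [hj, hw]

lemma exists_inner_eq_of_mem_kConvexHull {m : ℕ} {M : Set (EuclideanSpace ℝ (Fin n))}
    {x w : EuclideanSpace ℝ (Fin n)} (hx : x ∈ kConvexHull n m M) {T : Finset (Fin n)}
    (hT : T.card = m) (hw : ∀ i ∉ T, w i = 0) : ∃ y ∈ M, ⟪w, x⟫ = ⟪w, y⟫ := by
  obtain ⟨y, hy, hxy⟩ := mem_iInter₂.1 hx T hT
  refine ⟨y, hy, ?_⟩
  rw [← inner_coordProj_of_support hw x, ← hxy, inner_coordProj_of_support hw]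

lemma exists_apply_eq_of_mem_kConvexHull {m : ℕ} {M : Set (EuclideanSpace ℝ (Fin n))}
    {x : EuclideanSpace ℝ (Fin n)} (hx : x ∈ kConvexHull n m M) (hm : 1 ≤ m) (hmn : m ≤ n)
    (i : Fin n) : ∃ y ∈ M, x i = y i := by
  obtain ⟨T, hiT, -, hT⟩ := Finset.exists_subsuperset_card_eq (Finset.subset_univ {i})
    (by simpa using hm) (by simpa using hmn)
  have hw : ∀ j ∉ T, (EuclideanSpace.single i (1 : ℝ)) j = 0 := fun j hj => by
    simp [show j ≠ i from fun h => hj (hiT (by simp [h]))]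
  simpa [EuclideanSpace.inner_single_left] using exists_inner_eq_of_mem_kConvexHull hx hT hw

lemma isBounded_kConvexHull {m : ℕ} {M : Set (EuclideanSpace ℝ (Fin n))}
    (hM : Bornology.IsBounded M) (hm : 1 ≤ m) (hmn : m ≤ n) :
    Bornology.IsBounded (kConvexHull n m M) := by
  rw [Bornology.isBounded_induced, ← Bornology.forall_isBounded_image_eval_iff]
  intro i
  refine (((EuclideanSpace.proj i : EuclideanSpace ℝ (Fin n) →L[ℝ] ℝ).lipschitz.isBounded_image
    hM)).subset ?_
  rintro _ ⟨_, ⟨x, hx, rfl⟩, rfl⟩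
  obtain ⟨y, hy, hxy⟩ := exists_apply_eq_of_mem_kConvexHull hx hm hmn i
  exact ⟨y, hy, hxy.symm⟩

def IsGoodPosition (M : Set (EuclideanSpace ℝ (Fin n))) : Prop :=
  ∀ z ∈ absPolar M, ∀ i, (∀ l < i, z l = 0) → ∀ y ∈ M, |z i * y i| ≤ 1

lemma isGoodPosition_repr_image {E : Type*} [NormedAddCommGroup E] [InnerProductSpace ℝ E]
    {K : Set E} (b : OrthonormalBasis (Fin n) ℝ E) {r : Fin n → ℝ}
    (hb : IsGreedyFrame (absPolar K) b r) : IsGoodPosition (b.repr '' K) := by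
  rintro z hz i hzi _ ⟨a, ha, rfl⟩
  set z' := b.repr.symm z
  have hz' : z' ∈ absPolar K := fun y hy => by
    simpa [z', ← b.repr.inner_map_map] using hz _ (mem_image_of_mem _ hy)
  have hcoord : ∀ l, z l = ⟪b l, z'⟫ := fun l => by
    rw [← b.repr_apply_apply, b.repr.apply_symm_apply]
  have hnorm : ‖z'‖ ≤ r i := hb.2 z' hz' i fun l hl => by rw [← hcoord]; exact hzi l hl
  have hri : r i * |⟪b i, a⟫| ≤ 1 := by
    simpa [real_inner_smul_left, abs_mul, abs_of_nonneg ((norm_nonneg _).trans hnorm)]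
      using hb.1 i a ha
  calc |z i * b.repr a i| = |⟪b i, z'⟫| * |⟪b i, a⟫| := by
        rw [hcoord, b.repr_apply_apply, abs_mul]
    _ ≤ r i * |⟪b i, a⟫| := by
        gcongr
        exact (abs_real_inner_le_norm _ _).trans (by rw [b.orthonormal.1 i, one_mul]; exact hnorm)
    _ ≤ 1 := hri

lemma IsGoodPosition.abs_inner_le_three {M : Set (EuclideanSpace ℝ (Fin n))}
    (hM : IsGoodPosition M) {u : EuclideanSpace ℝ (Fin n)} (hu : u ∈ absPolar M) {m : ℕ}
    (hm : 1 ≤ m) {S : Finset (Fin n)} (hS : S.card = m + 1) (hsupp : ∀ i ∉ S, u i = 0)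
    {x : EuclideanSpace ℝ (Fin n)} (hx : x ∈ kConvexHull n m M) : |⟪u, x⟫| ≤ 3 := by
  have hSne : S.Nonempty := Finset.card_pos.1 (by omega)
  set j := S.min' hSne
  have hprod : ∀ y ∈ M, |u j * y j| ≤ 1 :=
    hM u hu j fun l hl => hsupp l fun hlS => (S.min'_le l hlS).not_gt hl
  set u' := u - EuclideanSpace.single j (u j)
  have hsplit : ∀ y, ⟪u, y⟫ = ⟪u', y⟫ + u j * y j := fun y => by
    simp [u', inner_sub_left, EuclideanSpace.inner_single_left]
  have hu' : ∀ i ∉ S.erase j, u' i = 0 := fun i hi => by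
    by_cases hij : i = j
    · simp [u', hij]
    · simp [u', hij, hsupp i fun hiS => hi (Finset.mem_erase.2 ⟨hij, hiS⟩)]
  obtain ⟨y, hy, hxy⟩ := exists_inner_eq_of_mem_kConvexHull hx
    (by rw [Finset.card_erase_of_mem (S.min'_mem hSne), hS]; rfl) hu'
  have hmn : m < n := by simpa [hS] using S.card_le_univ.trans_eq (Fintype.card_fin n)
  obtain ⟨y', hy', hxy'⟩ := exists_apply_eq_of_mem_kConvexHull hx hm hmn.le j
  have hxyy' : ⟪u, x⟫ = ⟪u, y⟫ - u j * y j + u j * y' j := by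
    rw [hsplit x, hsplit y, hxy, hxy']
    ring
  calc |⟪u, x⟫| ≤ |⟪u, y⟫| + |u j * y j| + |u j * y' j| := by
        rw [hxyy']
        exact (abs_add_le _ _).trans (add_le_add_left (abs_sub _ _) _)
    _ ≤ 3 := by linarith [hu y hy, hprod y hy, hprod y' hy']

lemma IsGoodPosition.inv_three_smul_mem_kConvexHull {M : Set (EuclideanSpace ℝ (Fin n))}
    (hM : IsGoodPosition M) (hMc : IsCompact M) (hMconv : Convex ℝ M)
    (hMsym : ∀ y ∈ M, -y ∈ M) (hM0 : 0 ∈ M) {k : ℕ} (hk : 2 ≤ k)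
    {x : EuclideanSpace ℝ (Fin n)} (hx : x ∈ kConvexHull n (k - 1) M) :
    (3 : ℝ)⁻¹ • x ∈ kConvexHull n k M := by
  refine mem_iInter₂.2 fun S (hS : S.card = k) => ?_
  change coordProj S _ ∈ coordProj S '' M
  rw [← coe_coordProjₗ]
  refine absPolar_absPolar_subset
    (hMc.image (coordProjₗ S).continuous_of_finiteDimensional).isClosed (hMconv.linear_image _)
    ⟨0, hM0, map_zero _⟩ ?_ fun w hw => ?_
  · rintro _ ⟨y, hy, rfl⟩
    exact ⟨-y, hMsym y hy, map_neg _ _⟩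
  have hw' : coordProj S w ∈ absPolar M := fun y hy => by
    rw [inner_coordProj_left, ← coe_coordProjₗ]
    exact hw _ (mem_image_of_mem _ hy)
  have hwS : ∀ i ∉ S, coordProj S w i = 0 := fun i hi => by simp [coordProj, hi]
  have := hM.abs_inner_le_three hw' (by omega) (by omega) hwS hx
  rw [map_smul, coe_coordProjₗ, real_inner_comm, real_inner_smul_right, ← inner_coordProj_left,
    abs_mul, abs_inv, abs_of_pos three_pos]
  linarith

end Coordinates

lemma ndiam_le_mul_ndiam {n : ℕ} {N : EuclideanSpace ℝ (Fin n) → ℝ}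
    (hadd : ∀ x y, N (x + y) ≤ N x + N y) (hsmul : ∀ (c : ℝ) (x), N (c • x) = |c| * N x)
    {A B : Set (EuclideanSpace ℝ (Fin n))} {c : ℝ} (hc : 0 < c) (hAB : ∀ x ∈ A, c⁻¹ • x ∈ B)
    (hB : Bornology.IsBounded B) : ndiam N A ≤ c * ndiam N B := by
  let p : Seminorm ℝ (EuclideanSpace ℝ (Fin n)) := Seminorm.of N hadd hsmul
  have hbdd : BddAbove {d : ℝ | ∃ x ∈ B, ∃ y ∈ B, d = N (x - y)} := by
    have hcont : Continuous fun q : EuclideanSpace ℝ (Fin n) × EuclideanSpace ℝ (Fin n) =>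
        p (q.1 - q.2) :=
      p.convexOn.locallyLipschitz.continuous.comp (continuous_fst.sub continuous_snd)
    refine ((hB.isCompact_closure.prod hB.isCompact_closure).image hcont).bddAbove.mono ?_
    rintro _ ⟨x, hx, y, hy, rfl⟩
    exact ⟨(x, y), ⟨subset_closure hx, subset_closure hy⟩, rfl⟩
  refine Real.sSup_le ?_ (mul_nonneg hc.le (Real.sSup_nonneg ?_))
  · rintro _ ⟨x, hx, y, hy, rfl⟩
    have := le_csSup hbdd ⟨_, hAB x hx, _, hAB y hy, rfl⟩
    rw [← smul_sub, hsmul, abs_inv, abs_of_pos hc] at this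
    calc N (x - y) = c * (c⁻¹ * N (x - y)) := by field_simp
      _ ≤ c * ndiam N B := mul_le_mul_of_nonneg_left this hc.le
  · rintro _ ⟨x, -, y, -, rfl⟩
    exact apply_nonneg p (x - y)

/-- For every positive `n` and every symmetric convex body `K ⊆ ℝⁿ` there is `U ∈ SO(n)`
such that, for every norm `N` on `ℝⁿ` and every `k ∈ {2, …, n}`, the `N`-diameter of
`Q_{k-1}(UK)` is at most `3` times the `N`-diameter of `Q_k(UK)`. -/
theorem stmt_1 (n : ℕ) (hn : 0 < n) (K : Set (EuclideanSpace ℝ (Fin n)))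
    (hKcomp : IsCompact K) (hKconv : Convex ℝ K) (hKint : (interior K).Nonempty)
    (hKsym : K = -K) :
    ∃ U : EuclideanSpace ℝ (Fin n) ≃ₗᵢ[ℝ] EuclideanSpace ℝ (Fin n),
      LinearMap.det (U.toLinearEquiv : EuclideanSpace ℝ (Fin n) →ₗ[ℝ]
        EuclideanSpace ℝ (Fin n)) = 1 ∧
      ∀ N : EuclideanSpace ℝ (Fin n) → ℝ,
        (∀ x, N x = 0 ↔ x = 0) →
        (∀ x y, N (x + y) ≤ N x + N y) →
        (∀ (c : ℝ) (x), N (c • x) = |c| * N x) →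
        ∀ k : ℕ, 2 ≤ k → k ≤ n →
          ndiam N (kConvexHull n (k - 1) (⇑U '' K)) ≤
            3 * ndiam N (kConvexHull n k (⇑U '' K)) := by
  have h0 := hKconv.zero_mem_interior_of_neg_eq hKsym hKint
  obtain ⟨b, hdet, r, hb⟩ := exists_orthonormalBasis_det_repr_eq_one_isGreedyFrame hn
    (isCompact_absPolar h0) (zero_mem_absPolar K) fun _ => neg_mem_absPolar
  refine ⟨b.repr, hdet, fun N _ hadd hsmul k hk2 hkn => ?_⟩
  have hMc : IsCompact (b.repr '' K) := hKcomp.image b.repr.continuous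
  have hMsym : ∀ y ∈ b.repr '' K, -y ∈ b.repr '' K := by
    rintro _ ⟨a, ha, rfl⟩
    exact ⟨-a, by rw [hKsym]; simpa using ha, map_neg _ _⟩
  refine ndiam_le_mul_ndiam hadd hsmul three_pos (fun x hx => ?_)
    (isBounded_kConvexHull hMc.isBounded (by omega) hkn)
  exact (isGoodPosition_repr_image b hb).inv_three_smul_mem_kConvexHull hMc
    (hKconv.linear_image b.repr.toLinearMap) hMsym ⟨0, interior_subset h0, map_zero _⟩ hk2 hx
end

section
/- Let C be a symmetric convex body in a real Hilbert space H. For every δ > 0 there exists a complete orthonormal system 𝐞 in H such that, for every integer k ≥ 2, one has R_k(𝐞, C) ⊆ (3 + δ)·R_{k-1}(𝐞, C). -/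
open Set Pointwise

/-- `E ⊆ H` is a complete orthonormal system: its elements are pairwise orthogonal unit
vectors and its span is dense in `H`. -/
def IsCompleteONS {H : Type*} [NormedAddCommGroup H] [InnerProductSpace ℝ H]
    (E : Set H) : Prop :=
  Orthonormal ℝ ((↑) : E → H) ∧ (Submodule.span ℝ E).topologicalClosure = ⊤

/-- The `k`-cross approximation of `C ⊆ H` with respect to the orthonormal system `E`:
the closed convex hull of `C ∩ ⋃_{S ∈ [E]_k} F(S)`. -/
noncomputable def kCrossH {H : Type*} [NormedAddCommGroup H] [InnerProductSpace ℝ H]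
    (E : Set H) (k : ℕ) (C : Set H) : Set H :=
  closure (convexHull ℝ (C ∩ ⋃ S ∈ {S : Set H | S ⊆ E ∧ S.Finite ∧ S.ncard = k},
    ((Submodule.span ℝ S).topologicalClosure : Set H)))

/-!
Choose an orthonormal system greedily, by transfinite recursion: at each stage take `c ∈ C`
orthogonal to the vectors already chosen whose norm is within a factor `1 + ε` of the largest
possible one, and normalise it. The recursion only stops when the orthogonal complement of the
chosen vectors is trivial, so the system is complete.

Let `x ∈ C` lie in the span of a finite set `S` of chosen vectors, and let `e ∈ S` be the one chosen
first. Then `x` was a candidate at the stage of `e`, so `‖x‖ ≤ (1 + ε) ‖c‖`, whence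
`z = (⟪e, x⟫ / (1 + ε)) • e ∈ C`. Moreover `y = (x - ⟪e, x⟫ • e) / (2 + ε)` is a convex combination
of `x` and `-z`, so `y ∈ C ∩ span (S \ {e})`. As `x = (2 + ε) y + (1 + ε) z` with `y` and `z`
in `(k - 1)`-dimensional coordinate subspaces, `x ∈ (3 + 2ε) • R_{k-1}`.
-/

open Topology
open scoped RealInnerProductSpace

section Convex

variable {E : Type*} [AddCommGroup E] [Module ℝ E]

theorem Convex.balanced_of_eq_neg {C : Set E} (hconv : Convex ℝ C) (hsym : C = -C) :
    Balanced ℝ C :=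
  (balanced_iff_neg_mem hconv).2 fun x hx => by rw [hsym] at hx; simpa using hx

theorem Balanced.smul_mem_of_abs_le {C : Set E} (hC : Balanced ℝ C) {e : E} {s t : ℝ}
    (hs : 0 < s) (hse : s • e ∈ C) (hts : |t| ≤ s) : t • e ∈ C := by
  have h := hC.smul_mem (a := t / s) (by rwa [Real.norm_eq_abs, abs_div, abs_of_pos hs,
    div_le_one hs]) hse
  rwa [smul_smul, div_mul_cancel₀ t hs.ne'] at h

theorem add_smul_mem_smul_convexHull {s : Set E} {y z : E} (hy : y ∈ s) (hz : z ∈ s) {a b : ℝ}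
    (ha : 0 ≤ a) (hb : 0 ≤ b) (hab : 0 < a + b) :
    a • y + b • z ∈ (a + b) • convexHull ℝ s := by
  refine ⟨(a / (a + b)) • y + (b / (a + b)) • z, convex_convexHull ℝ s
    (subset_convexHull ℝ s hy) (subset_convexHull ℝ s hz) (by positivity) (by positivity)
    (by field_simp), ?_⟩
  change (a + b) • _ = _
  rw [smul_add, smul_smul, smul_smul, mul_div_cancel₀ _ hab.ne', mul_div_cancel₀ _ hab.ne']

theorem Convex.inv_smul_sub_smul_mem {C : Set E} (hconv : Convex ℝ C) (hbal : Balanced ℝ C)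
    {x e : E} {t ε : ℝ} (hε : 0 ≤ ε) (hx : x ∈ C) (hz : (t / (1 + ε)) • e ∈ C) :
    (2 + ε)⁻¹ • (x - t • e) ∈ C := by
  have hcomb := hconv hx (hbal.neg_mem_iff.2 hz) (a := (2 + ε)⁻¹) (b := (1 + ε) / (2 + ε))
    (by positivity) (by positivity) (by field_simp; ring)
  convert hcomb using 1
  match_scalars <;> field_simp

end Convex

section Normed

variable {E : Type*} [NormedAddCommGroup E] [NormedSpace ℝ E]

theorem Convex.zero_mem_interior_of_eq_neg {C : Set E} (hconv : Convex ℝ C) (hsym : C = -C)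
    (hint : (interior C).Nonempty) : (0 : E) ∈ interior C := by
  obtain ⟨p, hp⟩ := hint
  have hnp : -p ∈ C := (hconv.balanced_of_eq_neg hsym).neg_mem_iff.2 (interior_subset hp)
  simpa using hconv.combo_interior_self_mem_interior hp hnp (a := 1/2) (b := 1/2)
    (by norm_num) (by norm_num) (by norm_num)

theorem exists_pos_smul_mem_of_mem_nhds_zero {C : Set E} (hC0 : C ∈ 𝓝 (0 : E)) (v : E) :
    ∃ t : ℝ, 0 < t ∧ t • v ∈ C := by
  have hlim : Filter.Tendsto (fun t : ℝ => t • v) (𝓝[>] 0) (𝓝 0) :=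
    ((continuous_id.smul continuous_const).tendsto' 0 0 (zero_smul ℝ v)).mono_left
      nhdsWithin_le_nhds
  have hpos : ∀ᶠ t in 𝓝[>] (0 : ℝ), 0 < t := self_mem_nhdsWithin
  exact (hpos.and (hlim.eventually hC0)).exists

def IsNearlyLongest (C : Set E) (ε : ℝ) (K : Submodule ℝ E) (c : E) : Prop :=
  c ∈ C ∧ c ∈ K ∧ c ≠ 0 ∧ ∀ x ∈ C, x ∈ K → ‖x‖ ≤ (1 + ε) * ‖c‖

theorem exists_isNearlyLongest {C : Set E} (hC0 : C ∈ 𝓝 (0 : E)) (hbdd : Bornology.IsBounded C)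
    {ε : ℝ} (hε : 0 < ε) {K : Submodule ℝ E} (hK : K ≠ ⊥) : ∃ c, IsNearlyLongest C ε K c := by
  obtain ⟨v, hvK, hv0⟩ := K.ne_bot_iff.1 hK
  obtain ⟨t, ht, htv⟩ := exists_pos_smul_mem_of_mem_nhds_zero hC0 v
  have htvK : t • v ∈ C ∩ K := ⟨htv, K.smul_mem t hvK⟩
  obtain ⟨R, hR⟩ := isBounded_iff_forall_norm_le.1 hbdd
  have hbddρ : BddAbove (norm '' (C ∩ K)) := ⟨R, forall_mem_image.2 fun x hx => hR x hx.1⟩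
  set ρ := sSup (norm '' (C ∩ K))
  have hρ : 0 < ρ := lt_csSup_of_lt hbddρ (mem_image_of_mem _ htvK)
    (norm_pos_iff.2 (smul_ne_zero ht.ne' hv0))
  obtain ⟨_, ⟨c, hc, rfl⟩, hlt⟩ := exists_lt_of_lt_csSup ⟨_, mem_image_of_mem _ htvK⟩
    (div_lt_self hρ (by linarith : (1 : ℝ) < 1 + ε))
  rw [div_lt_iff₀ (by linarith)] at hlt
  refine ⟨c, hc.1, hc.2, fun h => ?_, fun x hx hxK => ?_⟩
  · rw [h, norm_zero] at hlt; linarith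
  · have := le_csSup hbddρ (mem_image_of_mem _ ⟨hx, hxK⟩)
    linarith

end Normed

universe u

variable {H : Type u} [NormedAddCommGroup H] [InnerProductSpace ℝ H]

theorem mem_orthogonal_span_iff {P : Set H} {x : H} :
    x ∈ (Submodule.span ℝ P)ᗮ ↔ ∀ p ∈ P, ⟪p, x⟫ = 0 := by
  rw [← Submodule.span_singleton_le_iff_mem, ← Submodule.isOrtho_iff_le, Submodule.isOrtho_span]
  simp [real_inner_comm]

theorem sub_inner_smul_mem_span_diff {S : Set H} {e x : H} (he : e ∈ S) (he1 : ‖e‖ = 1)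
    (horth : ∀ v ∈ S \ {e}, ⟪v, e⟫ = 0) (hx : x ∈ Submodule.span ℝ S) :
    x - ⟪e, x⟫ • e ∈ Submodule.span ℝ (S \ {e}) := by
  rw [← sdiff_union_of_subset (singleton_subset_iff.2 he), Submodule.span_union] at hx
  obtain ⟨w, hw, _, hz, rfl⟩ := Submodule.mem_sup.1 hx
  obtain ⟨t, rfl⟩ := Submodule.mem_span_singleton.1 hz
  have hew : ⟪e, w⟫ = 0 :=
    Submodule.inner_left_of_mem_orthogonal hw (mem_orthogonal_span_iff.2 horth)
  rwa [inner_add_right, hew, real_inner_smul_right, real_inner_self_eq_norm_sq, he1, one_pow,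
    mul_one, zero_add, add_sub_cancel_right]

section Orthonormal

variable {ι : Type*} {b : ι → H}

theorem Orthonormal.inner_eq_zero_of_mem_range (hb : Orthonormal ℝ b) {v w : H}
    (hv : v ∈ range b) (hw : w ∈ range b) (hvw : v ≠ w) : ⟪v, w⟫ = 0 := by
  obtain ⟨i, rfl⟩ := hv
  obtain ⟨j, rfl⟩ := hw
  exact hb.2 fun h => hvw (congrArg b h)

theorem Orthonormal.exists_first_mem [LinearOrder ι] (hb : Orthonormal ℝ b) {S : Set H}
    (hSb : S ⊆ range b) (hSfin : S.Finite) (hS : S.Nonempty) :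
    ∃ i, b i ∈ S ∧ ∀ x ∈ Submodule.span ℝ S, ∀ j < i, ⟪b j, x⟫ = 0 := by
  obtain ⟨i, hiS, hmin⟩ := exists_min_image (b ⁻¹' S) id
    (hSfin.preimage hb.linearIndependent.injective.injOn)
    (by obtain ⟨_, hv⟩ := hS; obtain ⟨j, rfl⟩ := hSb hv; exact ⟨j, hv⟩)
  refine ⟨i, hiS, fun x hx j hj => Submodule.inner_left_of_mem_orthogonal hx
    (mem_orthogonal_span_iff.2 fun v hv => ?_)⟩
  refine hb.inner_eq_zero_of_mem_range (hSb hv) ⟨j, rfl⟩ ?_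
  rintro rfl
  exact (hmin j hv).not_gt hj

end Orthonormal

section Greedy

variable (C : Set H) (ε : ℝ)

open Classical in
noncomputable def greedyStep (P : Set H) : H :=
  if h : ∃ c, IsNearlyLongest C ε (Submodule.span ℝ P)ᗮ c then ‖h.choose‖⁻¹ • h.choose else 0

noncomputable def greedySeq : Ordinal.{u} → H :=
  Ordinal.lt_wf.fix fun α ih => greedyStep C ε (range fun β : Iio α => ih β β.2)

theorem greedySeq_eq (α : Ordinal.{u}) :
    greedySeq C ε α = greedyStep C ε (greedySeq C ε '' Iio α) := by
  rw [greedySeq, WellFounded.fix_eq, image_eq_range]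

variable {C ε} {P : Set H}

theorem greedyStep_mem_orthogonal : greedyStep C ε P ∈ (Submodule.span ℝ P)ᗮ := by
  unfold greedyStep
  split_ifs with h
  · exact Submodule.smul_mem _ _ h.choose_spec.2.1
  · exact Submodule.zero_mem _

theorem greedyStep_ne_zero (h : ∃ c, IsNearlyLongest C ε (Submodule.span ℝ P)ᗮ c) :
    greedyStep C ε P ≠ 0 := by
  rw [greedyStep, dif_pos h]
  exact smul_ne_zero (inv_ne_zero (norm_ne_zero_iff.2 h.choose_spec.2.2.1)) h.choose_spec.2.2.1

theorem exists_of_greedyStep_ne_zero (h : greedyStep C ε P ≠ 0) :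
    ∃ c, IsNearlyLongest C ε (Submodule.span ℝ P)ᗮ c ∧ greedyStep C ε P = ‖c‖⁻¹ • c := by
  unfold greedyStep at h ⊢
  split_ifs at h ⊢ with hc
  · exact ⟨_, hc.choose_spec, rfl⟩
  · exact absurd rfl h

theorem inner_greedySeq_eq_zero {α β : Ordinal.{u}} (hβα : β < α) :
    ⟪greedySeq C ε β, greedySeq C ε α⟫ = 0 := by
  rw [greedySeq_eq C ε α]
  exact Submodule.inner_right_of_mem_orthogonal
    (Submodule.subset_span (mem_image_of_mem _ hβα)) greedyStep_mem_orthogonal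

theorem exists_greedySeq_eq_zero : ∃ α, greedySeq C ε α = 0 := by
  by_contra! h
  refine not_injective_of_ordinal (greedySeq C ε) fun β α hβα => ?_
  by_contra hne
  rcases lt_or_gt_of_ne hne with hlt | hlt <;>
  exact h α (inner_self_eq_zero.1 (hβα ▸ inner_greedySeq_eq_zero hlt))

theorem norm_greedySeq {α : Ordinal.{u}} (h : greedySeq C ε α ≠ 0) : ‖greedySeq C ε α‖ = 1 := by
  rw [greedySeq_eq] at h ⊢
  obtain ⟨c, hc, hα⟩ := exists_of_greedyStep_ne_zero h
  rw [hα]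
  exact norm_smul_inv_norm hc.2.2.1

def IsGreedySystem {ι : Type*} [LT ι] (C : Set H) (ε : ℝ) (b : ι → H) : Prop :=
  ∀ i, ∃ s > 0, s • b i ∈ C ∧ ∀ x ∈ C, (∀ j < i, ⟪b j, x⟫ = 0) → ‖x‖ ≤ (1 + ε) * s

variable {Λ : Ordinal.{u}}

theorem orthonormal_greedySeq (hne : ∀ α < Λ, greedySeq C ε α ≠ 0) :
    Orthonormal ℝ fun i : Iio Λ => greedySeq C ε i := by
  rw [orthonormal_iff_ite]
  intro i j
  split_ifs with hij
  · rw [hij, real_inner_self_eq_norm_sq, norm_greedySeq (hne j j.2), one_pow]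
  · rcases lt_or_gt_of_ne (Subtype.coe_ne_coe.2 hij) with h | h
    · exact inner_greedySeq_eq_zero h
    · rw [real_inner_comm]
      exact inner_greedySeq_eq_zero h

theorem isGreedySystem_greedySeq (hne : ∀ α < Λ, greedySeq C ε α ≠ 0) :
    IsGreedySystem C ε fun i : Iio Λ => greedySeq C ε i := by
  intro i
  have hi := hne i i.2
  rw [greedySeq_eq] at hi
  obtain ⟨c, hc, hci⟩ := exists_of_greedyStep_ne_zero hi
  have hc0 : ‖c‖ ≠ 0 := norm_ne_zero_iff.2 hc.2.2.1
  refine ⟨‖c‖, lt_of_le_of_ne (norm_nonneg c) hc0.symm, ?_, fun x hx hxb => hc.2.2.2 x hx ?_⟩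
  · change ‖c‖ • greedySeq C ε i ∈ C
    rw [greedySeq_eq, hci, smul_inv_smul₀ hc0]
    exact hc.1
  · refine mem_orthogonal_span_iff.2 ?_
    rintro _ ⟨β, hβ, rfl⟩
    exact hxb ⟨β, mem_Iio.2 (hβ.trans i.2)⟩ hβ

end Greedy

theorem exists_greedySystem {C : Set H} (hC0 : C ∈ 𝓝 (0 : H)) (hbdd : Bornology.IsBounded C)
    {ε : ℝ} (hε : 0 < ε) :
    ∃ (Λ : Ordinal.{u}) (b : Iio Λ → H),
      Orthonormal ℝ b ∧ (Submodule.span ℝ (range b))ᗮ = ⊥ ∧ IsGreedySystem C ε b := by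
  obtain ⟨Λ, hΛ, hmin⟩ := wellFounded_lt.has_min _ (exists_greedySeq_eq_zero (C := C) (ε := ε))
  have hne : ∀ α < Λ, greedySeq C ε α ≠ 0 := fun α hα h => hmin α h hα
  refine ⟨Λ, _, orthonormal_greedySeq hne, ?_, isGreedySystem_greedySeq hne⟩
  by_contra hK
  refine greedyStep_ne_zero (exists_isNearlyLongest hC0 hbdd hε hK) ?_
  rwa [← image_eq_range, ← greedySeq_eq]

theorem Balanced.inner_div_smul_mem {C : Set H} (hbal : Balanced ℝ C) {e x : H} {s a : ℝ}
    (he : ‖e‖ = 1) (hs : 0 < s) (hse : s • e ∈ C) (ha : 0 < a) (hxs : ‖x‖ ≤ a * s) :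
    (⟪e, x⟫ / a) • e ∈ C := by
  refine hbal.smul_mem_of_abs_le hs hse ?_
  rw [abs_div, abs_of_pos ha, div_le_iff₀ ha]
  calc |⟪e, x⟫| ≤ ‖e‖ * ‖x‖ := abs_real_inner_le_norm e x
    _ ≤ s * a := by rw [he, one_mul, mul_comm]; exact hxs

noncomputable def crossGenerators (E : Set H) (k : ℕ) (C : Set H) : Set H :=
  C ∩ ⋃ S ∈ {S : Set H | S ⊆ E ∧ S.Finite ∧ S.ncard = k},
    ((Submodule.span ℝ S).topologicalClosure : Set H)

theorem mem_crossGenerators_iff {E : Set H} {k : ℕ} {C : Set H} {x : H} :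
    x ∈ crossGenerators E k C ↔
      x ∈ C ∧ ∃ S ⊆ E, S.Finite ∧ S.ncard = k ∧ x ∈ Submodule.span ℝ S := by
  simp only [crossGenerators, mem_inter_iff, mem_iUnion₂, mem_ofPred_eq, exists_prop, and_assoc]
  refine and_congr_right fun _ => exists_congr fun S => and_congr_right fun _ =>
    and_congr_right fun hS => and_congr_right fun _ => ?_
  have := FiniteDimensional.span_of_finite ℝ hS
  rw [(Submodule.closed_of_finiteDimensional _).submodule_topologicalClosure_eq]
  rfl

theorem kCrossH_subset_smul_of_subset {E : Set H} {k l : ℕ} {C : Set H} {a : ℝ} (ha : a ≠ 0)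
    (h : crossGenerators E k C ⊆ a • convexHull ℝ (crossGenerators E l C)) :
    kCrossH E k C ⊆ a • kCrossH E l C :=
  closure_minimal (convexHull_min (h.trans (smul_set_mono subset_closure))
    ((convex_convexHull ℝ _).closure.smul a)) (isClosed_closure.smul_of_ne_zero ha)

theorem crossGenerators_subset_smul_convexHull {ι : Type*} [LinearOrder ι] {C : Set H} {ε : ℝ}
    {b : ι → H} (hb : Orthonormal ℝ b) (hg : IsGreedySystem C ε b) (hconv : Convex ℝ C)
    (hbal : Balanced ℝ C) (hε : 0 ≤ ε) {k : ℕ} (hk : 2 ≤ k) :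
    crossGenerators (range b) k C ⊆
      (3 + 2 * ε) • convexHull ℝ (crossGenerators (range b) (k - 1) C) := by
  intro x hx
  obtain ⟨hxC, S, hSb, hSfin, hScard, hxS⟩ := mem_crossGenerators_iff.1 hx
  obtain ⟨i, hiS, hfirst⟩ :=
    hb.exists_first_mem hSb hSfin (nonempty_of_ncard_ne_zero (by omega))
  obtain ⟨s, hs, hsC, hbound⟩ := hg i
  have hz : (⟪b i, x⟫ / (1 + ε)) • b i ∈ C :=
    hbal.inner_div_smul_mem (hb.1 i) hs hsC (by linarith) (hbound x hxC (hfirst x hxS))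
  have hy : (2 + ε)⁻¹ • (x - ⟪b i, x⟫ • b i) ∈ C := hconv.inv_smul_sub_smul_mem hbal hε hxC hz
  have hzS : (⟪b i, x⟫ / (1 + ε)) • b i ∈ crossGenerators (range b) (k - 1) C := by
    obtain ⟨v, hvS, hvi⟩ := exists_ne_of_one_lt_ncard (by omega : 1 < S.ncard) (b i)
    refine mem_crossGenerators_iff.2 ⟨hz, S \ {v}, sdiff_subset.trans hSb, hSfin.sdiff,
      by rw [ncard_sdiff_singleton_of_mem hvS, hScard], ?_⟩
    exact Submodule.smul_mem _ _ (Submodule.subset_span ⟨hiS, hvi.symm⟩)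
  have hyS : (2 + ε)⁻¹ • (x - ⟪b i, x⟫ • b i) ∈ crossGenerators (range b) (k - 1) C := by
    refine mem_crossGenerators_iff.2 ⟨hy, S \ {b i}, sdiff_subset.trans hSb, hSfin.sdiff,
      by rw [ncard_sdiff_singleton_of_mem hiS, hScard], ?_⟩
    refine Submodule.smul_mem _ _ (sub_inner_smul_mem_span_diff hiS (hb.1 i) ?_ hxS)
    exact fun v hv => hb.inner_eq_zero_of_mem_range (hSb hv.1) ⟨i, rfl⟩ hv.2
  have hsplit : (2 + ε) • ((2 + ε)⁻¹ • (x - ⟪b i, x⟫ • b i)) +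
      (1 + ε) • ((⟪b i, x⟫ / (1 + ε)) • b i) = x := by
    match_scalars <;> field_simp
    ring
  have h := add_smul_mem_smul_convexHull hyS hzS (a := 2 + ε) (b := 1 + ε) (by linarith)
    (by linarith) (by linarith)
  rwa [hsplit, show 2 + ε + (1 + ε) = 3 + 2 * ε by ring] at h

theorem stmt_11_general {H : Type*} [NormedAddCommGroup H] [InnerProductSpace ℝ H] [CompleteSpace H]
    (C : Set H) (hCconv : Convex ℝ C)
    (hCbdd : Bornology.IsBounded C) (hCint : (interior C).Nonempty) (hCsym : C = -C)
    (δ : ℝ) (hδ : 0 < δ) :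
    ∃ E : Set H, IsCompleteONS E ∧
      ∀ k : ℕ, 2 ≤ k → kCrossH E k C ⊆ (3 + δ) • kCrossH E (k - 1) C := by
  have hC0 : C ∈ 𝓝 0 :=
    mem_interior_iff_mem_nhds.1 (hCconv.zero_mem_interior_of_eq_neg hCsym hCint)
  obtain ⟨Λ, b, hb, hcompl, hgreedy⟩ := exists_greedySystem hC0 hCbdd (half_pos hδ)
  refine ⟨range b, ⟨hb.toSubtypeRange, Submodule.topologicalClosure_eq_top_iff.2 hcompl⟩,
    fun k hk => ?_⟩
  have h := kCrossH_subset_smul_of_subset (by positivity) <|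
    crossGenerators_subset_smul_convexHull hb hgreedy hCconv
      (hCconv.balanced_of_eq_neg hCsym) (half_pos hδ).le hk
  rwa [mul_div_cancel₀ δ two_ne_zero] at h

/-- For every symmetric convex body `C` in a Hilbert space and every `δ > 0` there is a
complete orthonormal system `E` such that `R_k(E, C) ⊆ (3 + δ) • R_{k-1}(E, C)` for every
integer `k ≥ 2`. -/
theorem stmt_11 {H : Type*} [NormedAddCommGroup H] [InnerProductSpace ℝ H] [CompleteSpace H]
    (C : Set H) (hCcl : IsClosed C) (hCconv : Convex ℝ C)
    (hCbdd : Bornology.IsBounded C) (hCint : (interior C).Nonempty) (hCsym : C = -C)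
    (δ : ℝ) (hδ : 0 < δ) :
    ∃ E : Set H, IsCompleteONS E ∧
      ∀ k : ℕ, 2 ≤ k → kCrossH E k C ⊆ (3 + δ) • kCrossH E (k - 1) C :=
  stmt_11_general C hCconv hCbdd hCint hCsym δ hδ
end
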